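/- Let k, k' be integers with 0 ≤ k ≤ k' and k' > 0, let K ⊂ ℝ² be the convex hull of (0,0), (1,k), (−1,k), (0,k+k'), and let s be a positive divisor of gcd(k + k', 2k). Set M_s := {(x, y) ∈ ℤ × ℤ : s divides y − kx}. Then the number of points of M_s lying in the topological interior of K equals (k + k')/s − 1. -/

import Mathlib

/-!
The interior of the kite is `{k |x| < y, y + k' |x| < k + k'}`: the functions `k |x| - y` and
`y + k' |x|` are convex, so on the kite they are bounded by their values at the vertices; conversely
each point of that open set lies on a segment from the apex `(0, 0)` or `(0, k + k')` to the
diagonal `{y = k, |x| ≤ 1}`. A lattice point of the interior has `|x| < 1`, so the points counted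
are `(0, y)` with `0 < y < k + k'` and `s ∣ y`; as `s ∣ k + k'` there are `(k + k') / s - 1` of them.
-/

/-- The sublattice `M_s = {(x, y) : s ∣ y - k x}` of `ℤ × ℤ`. -/
def kiteSublattice (k : ℤ) (s : ℕ) : AddSubgroup (ℤ × ℤ) where
  carrier := {p : ℤ × ℤ | (s : ℤ) ∣ p.2 - k * p.1}
  zero_mem' := by
    show (s : ℤ) ∣ (0 : ℤ × ℤ).2 - k * (0 : ℤ × ℤ).1
    simp
  add_mem' := by
    intro p q hp hq
    show (s : ℤ) ∣ (p + q).2 - k * (p + q).1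
    simp only [Prod.fst_add, Prod.snd_add]
    have h : p.2 + q.2 - k * (p.1 + q.1) = (p.2 - k * p.1) + (q.2 - k * q.1) := by ring
    rw [h]
    exact dvd_add hp hq
  neg_mem' := by
    intro p hp
    show (s : ℤ) ∣ (-p).2 - k * (-p).1
    simp only [Prod.fst_neg, Prod.snd_neg]
    have h : -p.2 - k * -p.1 = -(p.2 - k * p.1) := by ring
    rw [h]
    exact dvd_neg.2 hp

open Set

theorem mem_kiteSublattice {k : ℤ} {s : ℕ} {p : ℤ × ℤ} :
    p ∈ kiteSublattice k s ↔ (s : ℤ) ∣ p.2 - k * p.1 := Iff.rfl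

theorem Convex.mk_mem_of_abs_le_of_apex {S : Set (ℝ × ℝ)} (hS : Convex ℝ S) {c h : ℝ}
    (hapex : (0, c) ∈ S) (hleft : (-1, h) ∈ S) (hright : (1, h) ∈ S)
    {x t : ℝ} (ht : t ≤ 1) (hx : |x| ≤ t) :
    (x, c + t * (h - c)) ∈ S := by
  have ht0 : 0 ≤ t := (abs_nonneg x).trans hx
  have hbase : (x / t, h) ∈ S := by
    have hxt : |x / t| ≤ 1 := by
      rcases ht0.eq_or_lt with rfl | htpos
      · simp
      · rwa [abs_div, abs_of_pos htpos, div_le_one htpos]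
    have h1 := abs_le.1 hxt
    convert hS hleft hright (a := (1 - x / t) / 2) (b := (1 + x / t) / 2)
      (by linarith) (by linarith) (by ring) using 1
    ext <;> simp <;> ring
  convert hS hapex hbase (sub_nonneg.2 ht) ht0 (by ring) using 1
  ext
  · simpa using (mul_div_cancel_of_imp' fun h : t = 0 => abs_nonpos_iff.1 (h ▸ hx)).symm
  · simp; ring

theorem convexOn_mul_abs_fst_add_mul_snd {a : ℝ} (ha : 0 ≤ a) (b : ℝ) :
    ConvexOn ℝ univ fun p : ℝ × ℝ => a * |p.1| + b * p.2 := by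
  refine ⟨convex_univ, fun p _ q _ α β hα hβ hαβ => ?_⟩
  have := abs_add_le (α * p.1) (β * q.1)
  simp only [Prod.smul_fst, Prod.smul_snd, Prod.fst_add, Prod.snd_add, smul_eq_mul, abs_mul,
    abs_of_nonneg hα, abs_of_nonneg hβ] at this ⊢
  nlinarith

theorem exists_pos_vertical_mem_of_mem_interior {S : Set (ℝ × ℝ)} {p : ℝ × ℝ}
    (hp : p ∈ interior S) : ∃ ε > 0, (p.1, p.2 - ε) ∈ S ∧ (p.1, p.2 + ε) ∈ S := by
  have hcont : Continuous fun t : ℝ => (p.1, p.2 + t) := by fun_prop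
  have hnhds : (fun t : ℝ => (p.1, p.2 + t)) ⁻¹' S ∈ nhds 0 :=
    hcont.continuousAt.preimage_mem_nhds (by simpa using mem_interior_iff_mem_nhds.1 hp)
  obtain ⟨ε, hε, hball⟩ := Metric.mem_nhds_iff.1 hnhds
  have hmem {t : ℝ} (ht : |t| < ε) : (p.1, p.2 + t) ∈ S :=
    hball (by rwa [mem_ball_zero_iff, Real.norm_eq_abs])
  have hε2 : |ε / 2| < ε := by rw [abs_of_pos (half_pos hε)]; linarith
  exact ⟨ε / 2, half_pos hε,
    by simpa [sub_eq_add_neg] using hmem (t := -(ε / 2)) (by rwa [abs_neg]), hmem hε2⟩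

def kite (k k' : ℝ) : Set (ℝ × ℝ) := convexHull ℝ {(0, 0), (1, k), (-1, k), (0, k + k')}

section Kite

variable {k k' : ℝ}

theorem kite_subset (hk : 0 ≤ k) (hk' : 0 ≤ k') :
    kite k k' ⊆ {p | k * |p.1| ≤ p.2 ∧ p.2 + k' * |p.1| ≤ k + k'} := by
  intro p hp
  obtain ⟨v, hv, hlow⟩ := (convexOn_mul_abs_fst_add_mul_snd hk (-1)).exists_ge_of_mem_convexHull
    (subset_univ _) hp
  obtain ⟨w, hw, hup⟩ := (convexOn_mul_abs_fst_add_mul_snd hk' 1).exists_ge_of_mem_convexHull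
    (subset_univ _) hp
  simp only [mem_insert_iff, mem_singleton_iff] at hv hw
  constructor
  · rcases hv with rfl | rfl | rfl | rfl <;> simp at hlow <;> linarith
  · rcases hw with rfl | rfl | rfl | rfl <;> simp at hup <;> linarith

theorem setOf_subset_kite (hk : 0 ≤ k) (hk' : 0 < k') :
    {p | k * |p.1| < p.2 ∧ p.2 + k' * |p.1| < k + k'} ⊆ kite k k' := by
  rintro ⟨x, y⟩ ⟨hlow, hup⟩
  have hS : Convex ℝ (kite k k') := convex_convexHull ℝ _
  have hvertex (v : ℝ × ℝ) (hv : v ∈ ({(0, 0), (1, k), (-1, k), (0, k + k')} : Set _)) :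
      v ∈ kite k k' :=
    subset_convexHull ℝ _ hv
  have hx : 0 ≤ |x| := abs_nonneg x
  rcases le_or_gt y k with hyk | hky
  · have hk0 : 0 < k := by nlinarith
    convert hS.mk_mem_of_abs_le_of_apex (hvertex (0, 0) (by simp)) (hvertex (-1, k) (by simp))
      (hvertex (1, k) (by simp)) (t := y / k) ((div_le_one hk0).2 hyk)
      ((le_div_iff₀ hk0).2 (by linarith)) using 2
    field_simp
    ring
  · convert hS.mk_mem_of_abs_le_of_apex (hvertex (0, k + k') (by simp))
      (hvertex (-1, k) (by simp)) (hvertex (1, k) (by simp)) (t := (k + k' - y) / k')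
      ((div_le_one hk').2 (by linarith))
      ((le_div_iff₀ hk').2 (by linarith)) using 2
    field_simp
    ring

theorem interior_kite (hk : 0 ≤ k) (hk' : 0 < k') :
    interior (kite k k') = {p | k * |p.1| < p.2 ∧ p.2 + k' * |p.1| < k + k'} := by
  refine subset_antisymm (fun p hp => ?_) (interior_maximal (setOf_subset_kite hk hk') ?_)
  · obtain ⟨ε, hε, hdown, hup⟩ := exists_pos_vertical_mem_of_mem_interior hp
    have := (kite_subset hk hk'.le hdown).1
    have := (kite_subset hk hk'.le hup).2
    constructor <;> dsimp only at * <;> linarith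
  · exact (isOpen_lt (by fun_prop) (by fun_prop)).and (isOpen_lt (by fun_prop) (by fun_prop))

theorem intCast_mem_interior_kite_iff (hk : 0 ≤ k) (hk' : 0 < k') {x y : ℤ} :
    ((x : ℝ), (y : ℝ)) ∈ interior (kite k k') ↔ x = 0 ∧ 0 < y ∧ (y : ℝ) < k + k' := by
  rw [interior_kite hk hk', mem_ofPred_eq]
  constructor
  · rintro ⟨hlow, hup⟩
    -- for `|x| ≥ 1` the two inequalities would give `k < y < k`
    obtain rfl : x = 0 := by
      have hx : |(x : ℝ)| < 1 := by
        by_contra! hx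
        nlinarith
      exact Int.abs_lt_one_iff.1 (by exact_mod_cast hx)
    exact ⟨rfl, by simpa using hlow, by simpa using hup⟩
  · rintro ⟨rfl, hy0, hyN⟩
    simpa using ⟨hy0, hyN⟩

end Kite

theorem Int.ncard_setOf_dvd_pos_lt {s N : ℕ} (hN : 0 < N) (hsN : s ∣ N) :
    {y : ℤ | 0 < y ∧ y < N ∧ (s : ℤ) ∣ y}.ncard = N / s - 1 := by
  obtain ⟨n, rfl⟩ := hsN
  have hs : (s : ℤ) ≠ 0 := by rintro h; simp_all
  have hset :
      {y : ℤ | 0 < y ∧ y < (s * n : ℕ) ∧ (s : ℤ) ∣ y} = ((s : ℤ) * ·) '' Ioo (0 : ℤ) n := by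
    ext y
    constructor
    · rintro ⟨hy0, hyN, t, rfl⟩
      refine ⟨t, ⟨?_, ?_⟩, rfl⟩ <;> push_cast at hyN <;> nlinarith
    · rintro ⟨t, ⟨ht0, htn⟩, rfl⟩
      refine ⟨?_, ?_, dvd_mul_right _ _⟩ <;> push_cast <;> nlinarith
  rw [hset, ncard_image_of_injective _ (mul_right_injective₀ hs), ← Finset.coe_Ioo,
    ncard_coe_finset, Int.card_Ioo, Nat.mul_div_cancel_left _ (by omega)]
  omega

theorem kite_interior_sublattice_points_general (k k' : ℕ) (hk' : 0 < k')
    (s : ℕ) (hdvd : s ∣ Nat.gcd (k + k') (2 * k))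
    (K : Set (ℝ × ℝ))
    (hK : K = convexHull ℝ
      {((0 : ℝ), (0 : ℝ)), ((1 : ℝ), (k : ℝ)), ((-1 : ℝ), (k : ℝ)),
        ((0 : ℝ), (k : ℝ) + (k' : ℝ))}) :
    Set.ncard {p : ℤ × ℤ | p ∈ kiteSublattice (k : ℤ) s ∧
        ((p.1 : ℝ), (p.2 : ℝ)) ∈ interior K} = (k + k') / s - 1 := by
  have hKint : interior K = interior (kite k k') := by rw [hK]; rfl
  have hset : {p : ℤ × ℤ | p ∈ kiteSublattice (k : ℤ) s ∧ ((p.1 : ℝ), (p.2 : ℝ)) ∈ interior K} =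
      (fun y : ℤ => ((0 : ℤ), y)) '' {y : ℤ | 0 < y ∧ y < (k + k' : ℕ) ∧ (s : ℤ) ∣ y} := by
    ext ⟨x, y⟩
    simp only [mem_ofPred_eq, mem_kiteSublattice, hKint,
      intCast_mem_interior_kite_iff (Nat.cast_nonneg k) (Nat.cast_pos.2 hk'), mem_image,
      Prod.mk.injEq]
    constructor
    · rintro ⟨hsy, rfl, hy0, hyN⟩
      exact ⟨y, ⟨hy0, by exact_mod_cast hyN, by simpa using hsy⟩, rfl, rfl⟩
    · rintro ⟨y, ⟨hy0, hyN, hsy⟩, rfl, rfl⟩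
      exact ⟨by simpa using hsy, rfl, hy0, by exact_mod_cast hyN⟩
  rw [hset, ncard_image_of_injective _ (Prod.mk_right_injective 0),
    Int.ncard_setOf_dvd_pos_lt (by omega) (hdvd.trans (Nat.gcd_dvd_left _ _))]

/-- The number of points of the index-`s` sublattice `M_s` lying in the
topological interior of the kite with vertices `(0,0)`, `(1,k)`, `(-1,k)`,
`(0,k+k')` equals `(k + k')/s - 1`. -/
theorem kite_interior_sublattice_points (k k' : ℕ) (hkk' : k ≤ k') (hk' : 0 < k')
    (s : ℕ) (hs : 0 < s) (hdvd : s ∣ Nat.gcd (k + k') (2 * k))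
    (K : Set (ℝ × ℝ))
    (hK : K = convexHull ℝ
      {((0 : ℝ), (0 : ℝ)), ((1 : ℝ), (k : ℝ)), ((-1 : ℝ), (k : ℝ)),
        ((0 : ℝ), (k : ℝ) + (k' : ℝ))}) :
    Set.ncard {p : ℤ × ℤ | p ∈ kiteSublattice (k : ℤ) s ∧
        ((p.1 : ℝ), (p.2 : ℝ)) ∈ interior K} = (k + k') / s - 1 :=
  kite_interior_sublattice_points_general k k' hk' s hdvd K hK
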